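/- Multi-round convergence of the abstract fault-tolerant averaging iteration: let n, f be natural numbers with n > 3f, let Q ⊆ Fin n have complement of cardinality at most f, let d ≥ 0, T ≥ 0, ϑ ≥ 1, and K ≥ 1. Suppose t⁰, t¹, …, t^K : Q → ℝ are successive rounds of pulse instants such that for every k < K and every q ∈ Q there exists an observation vector x : Fin n → ℝ with x p ∈ [t^k p, t^k p + d] for all p ∈ Q, and t^{k+1} q = mid_f(x) + T_q^k for some T_q^k ∈ [T/ϑ, T]. Then for every k ≤ K: (i) max_{q∈Q} t^k q − min_{q∈Q} t^k q ≤ 2^{−k}·(max_{q∈Q} t⁰ q − min_{q∈Q} t⁰ q) + 2·(1 − 2^{−k})·(d + (1 − ϑ⁻¹)·T), and (ii) min_{q∈Q} t⁰ q + k·T/ϑ ≤ t^k q ≤ max_{q∈Q} t⁰ q + k·(T + d) for all q ∈ Q. (This combines Lemma 3 and Corollary 2 of the paper: over the K_A cycles of the two-stage absorption process, the pulsing intervals I_k of the nonfaulty nodes shrink geometrically to the steady-state precision 2(d + ρϑ⁻¹T) while advancing by roughly T per cycle.) -/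

import Mathlib

open Finset

/-- The `k`-th smallest entry (1-indexed, counted with multiplicity) of `x : Fin n → ℝ`. -/
noncomputable def orderStat {n : ℕ} (x : Fin n → ℝ) (k : ℕ) : ℝ :=
  ((Multiset.map x (Finset.univ : Finset (Fin n)).val).sort (· ≤ ·)).getD (k - 1) 0

/-- The `k`-th smallest (1-indexed, with multiplicity) of the `|G|` values `x i`, `i ∈ G`. -/
noncomputable def orderStatOn {n : ℕ} (G : Finset (Fin n)) (x : Fin n → ℝ) (k : ℕ) : ℝ :=
  ((Multiset.map x G.val).sort (· ≤ ·)).getD (k - 1) 0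

/-- The fault-tolerant midpoint `mid_f(x) = (x_(f+1) + x_(n−f))/2`. -/
noncomputable def ftMid (n f : ℕ) (x : Fin n → ℝ) : ℝ :=
  (orderStat x (f + 1) + orderStat x (n - f)) / 2

/-- If the complement of `G` has at most `f` elements and `n > 3f`, then `G` is nonempty. -/
lemma nonempty_of_compl {n f : ℕ} (hn : 3 * f < n) {G : Finset (Fin n)}
    (hG : Gᶜ.card ≤ f) : G.Nonempty := by
  rw [← Finset.card_pos]
  have h := Finset.card_compl G
  simp only [Fintype.card_fin] at h
  omega

/-! Since fewer than a third of the nodes are faulty, every order statistic between the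
`(f+1)`-st and the `(n-f)`-th of an observation vector lies between the smallest and the largest
observation of a nonfaulty node; this gives the drift bounds. For the contraction, compare two
nonfaulty nodes with observation vectors `x` and `y`: at least `n - f` indices have `y` at most
`y_(n-f)`, and `Q` has at least `n - f` indices, so they share `n - 2f ≥ f + 1` nonfaulty
indices, at each of which `x ≤ y + d`. Hence `x_(f+1) ≤ y_(n-f) + d`, so two midpoints differ by
at most half the previous spread plus `d`, and the periods add at most `T - T/ϑ`. The spread
therefore obeys `S_{k+1} ≤ S_k / 2 + d + (1 - ϑ⁻¹) T`, which unrolls to the geometric bound. -/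

section SortedList

variable {α : Type*} [Preorder α] {l : List α}

lemma pred_getElem_iff_lt_countP (hl : l.SortedLE) {P : α → Bool}
    (hP : ∀ a b, a ≤ b → P b → P a) {k : ℕ} (hk : k < l.length) :
    P l[k] ↔ k < l.countP P := by
  constructor
  · intro hPk
    have htake : (l.take (k + 1)).countP P = k + 1 := by
      rw [List.countP_eq_length.mpr, List.length_take]
      · omega
      · intro a ha
        obtain ⟨i, hi, rfl⟩ := List.mem_take_iff_getElem.mp ha
        exact hP _ _ (hl.getElem_le_getElem_of_le (by omega)) hPk
    have := (List.take_sublist (k + 1) l).countP_le (p := P)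
    omega
  · intro hlt
    by_contra hPk
    have hdrop : (l.drop k).countP P = 0 := by
      rw [List.countP_eq_zero]
      intro a ha hPa
      obtain ⟨i, hi, rfl⟩ := List.mem_drop_iff_getElem.mp ha
      exact hPk (hP _ _ (hl.getElem_le_getElem_of_le (Nat.le_add_right k i)) hPa)
    have hsplit := List.countP_append (p := P) (l₁ := l.take k) (l₂ := l.drop k)
    rw [List.take_append_drop, hdrop] at hsplit
    have := (List.countP_le_length (p := P) (l := l.take k)).trans (List.length_take_le k l)
    omega

end SortedList

section OrderStat

variable {n : ℕ} (x : Fin n → ℝ)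

lemma countP_sort_map_univ (p : ℝ → Prop) [DecidablePred p] :
    ((Multiset.map x univ.val).sort (· ≤ ·)).countP (fun a => decide (p a)) = #{i | p (x i)} := by
  rw [← Multiset.coe_countP, Multiset.sort_eq, Multiset.countP_map]
  rfl

lemma orderStat_pred_iff {k : ℕ} (hk1 : 1 ≤ k) (hkn : k ≤ n) {p : ℝ → Prop} [DecidablePred p]
    (hp : ∀ a b, a ≤ b → p b → p a) : p (orderStat x k) ↔ k ≤ #{i | p (x i)} := by
  have hlen : k - 1 < ((Multiset.map x univ.val).sort (· ≤ ·)).length := by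
    simp only [Multiset.length_sort, Multiset.card_map, card_val, card_univ, Fintype.card_fin]
    omega
  rw [orderStat, List.getD_eq_getElem _ _ hlen, ← decide_eq_true_iff (p := p _),
    pred_getElem_iff_lt_countP (P := fun a => decide (p a)) (Multiset.pairwise_sort _ _).sortedLE
      (fun a b hab => by simpa using hp a b hab) hlen,
    countP_sort_map_univ]
  omega

lemma orderStat_le_iff {k : ℕ} (hk1 : 1 ≤ k) (hkn : k ≤ n) {c : ℝ} :
    orderStat x k ≤ c ↔ k ≤ #{i | x i ≤ c} :=
  orderStat_pred_iff x hk1 hkn fun _ _ hab hb => hab.trans hb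

lemma orderStat_lt_iff {k : ℕ} (hk1 : 1 ≤ k) (hkn : k ≤ n) {c : ℝ} :
    orderStat x k < c ↔ k ≤ #{i | x i < c} :=
  orderStat_pred_iff x hk1 hkn fun _ _ hab hb => hab.trans_lt hb

end OrderStat

section FewFaults

variable {n f : ℕ} {Q : Finset (Fin n)}

lemma le_card_add_of_card_compl_le (hQ : #Qᶜ ≤ f) : n ≤ #Q + f := by
  have := card_compl Q
  rw [Fintype.card_fin] at this
  have := card_le_univ Q
  rw [Fintype.card_fin] at this
  omega

variable {x y : Fin n → ℝ}

lemma orderStat_mem_Icc (hQ : #Qᶜ ≤ f) {k : ℕ} (hfk : f < k) (hkn : k + f ≤ n) {a b : ℝ}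
    (hx : ∀ p ∈ Q, x p ∈ Set.Icc a b) : orderStat x k ∈ Set.Icc a b := by
  have hQn := le_card_add_of_card_compl_le hQ
  constructor
  · by_contra! hlt
    have hbelow : #{i | x i < a} ≤ #Qᶜ :=
      card_le_card fun p hp => mem_compl.mpr fun hpQ =>
        (mem_filter.mp hp).2.not_ge (hx p hpQ).1
    have := (orderStat_lt_iff x (by omega) (by omega)).mp hlt
    omega
  · have habove : #Q ≤ #{i | x i ≤ b} :=
      card_le_card fun p hp => mem_filter.mpr ⟨mem_univ p, (hx p hp).2⟩
    exact (orderStat_le_iff x (by omega) (by omega)).mpr (by omega)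

lemma orderStat_le_orderStat_add (hQ : #Qᶜ ≤ f) {j k : ℕ} (hj : 1 ≤ j) (hjk : j + f ≤ k)
    (hkn : k ≤ n) {d : ℝ} (hxy : ∀ p ∈ Q, x p ≤ y p + d) :
    orderStat x j ≤ orderStat y k + d := by
  have hQn := le_card_add_of_card_compl_le hQ
  set F : Finset (Fin n) := {i | y i ≤ orderStat y k}
  have hF : k ≤ #F := (orderStat_le_iff y (by omega) hkn).mp le_rfl
  have hQF : j ≤ #(Q ∩ F) := by
    have := card_inter_add_card_union Q F
    have := card_le_univ (Q ∪ F)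
    rw [Fintype.card_fin] at this
    omega
  refine (orderStat_le_iff x hj (by omega)).mpr (hQF.trans (card_le_card fun p hp => ?_))
  obtain ⟨hpQ, hpF⟩ := mem_inter.mp hp
  exact mem_filter.mpr ⟨mem_univ p, (hxy p hpQ).trans (by simpa [F] using hpF)⟩

lemma ftMid_mem_Icc (hn : 2 * f < n) (hQ : #Qᶜ ≤ f) {a b : ℝ}
    (hx : ∀ p ∈ Q, x p ∈ Set.Icc a b) : ftMid n f x ∈ Set.Icc a b := by
  have h₁ := orderStat_mem_Icc hQ (k := f + 1) (by omega) (by omega) hx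
  have h₂ := orderStat_mem_Icc hQ (k := n - f) (by omega) (by omega) hx
  simp only [Set.mem_Icc] at h₁ h₂ ⊢
  constructor <;> unfold ftMid <;> linarith

lemma ftMid_sub_ftMid_le (hn : 3 * f < n) (hQ : #Qᶜ ≤ f) {τ : Fin n → ℝ} {a b d : ℝ}
    (hτ : ∀ p ∈ Q, τ p ∈ Set.Icc a b) (hx : ∀ p ∈ Q, x p ∈ Set.Icc (τ p) (τ p + d))
    (hy : ∀ p ∈ Q, y p ∈ Set.Icc (τ p) (τ p + d)) :
    ftMid n f x - ftMid n f y ≤ (b - a) / 2 + d := by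
  have hcross : orderStat x (f + 1) ≤ orderStat y (n - f) + d :=
    orderStat_le_orderStat_add hQ (by omega) (by omega) (by omega)
      fun p hp => (hx p hp).2.trans (by linarith [(hy p hp).1])
  have hwiden : ∀ z : Fin n → ℝ, (∀ p ∈ Q, z p ∈ Set.Icc (τ p) (τ p + d)) →
      ∀ p ∈ Q, z p ∈ Set.Icc a (b + d) := fun z hz p hp =>
    ⟨(hτ p hp).1.trans (hz p hp).1, (hz p hp).2.trans (by linarith [(hτ p hp).2])⟩
  have hx_le : orderStat x (n - f) ≤ b + d :=
    (orderStat_mem_Icc hQ (by omega) (by omega) (hwiden x hx)).2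
  have hy_ge : a ≤ orderStat y (f + 1) :=
    (orderStat_mem_Icc hQ (by omega) (by omega) (hwiden y hy)).1
  unfold ftMid
  linarith

end FewFaults

lemma le_two_zpow_neg_mul_add_of_le_half_add {s : ℕ → ℝ} {c : ℝ} {K : ℕ}
    (hs : ∀ k < K, s (k + 1) ≤ s k / 2 + c) :
    ∀ k ≤ K, s k ≤ (2 : ℝ) ^ (-(k : ℤ)) * s 0 + 2 * (1 - (2 : ℝ) ^ (-(k : ℤ))) * c := by
  intro k hk
  induction k with
  | zero => simp
  | succ k ih =>
    have hpow : (2 : ℝ) ^ (-((k + 1 : ℕ) : ℤ)) = (2 : ℝ) ^ (-(k : ℤ)) / 2 := by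
      simp only [zpow_neg, zpow_natCast, pow_succ, mul_inv, div_eq_mul_inv]
    rw [hpow]
    linarith [hs k hk, ih (by omega)]

lemma mem_Icc_inf'_sup'_add_mul {ι : Type*} {s : Finset ι} (hne : s.Nonempty) {t : ℕ → ι → ℝ}
    {a b : ℝ} {K : ℕ}
    (ht : ∀ k < K, ∀ q ∈ s, t (k + 1) q ∈ Set.Icc (s.inf' hne (t k) + a) (s.sup' hne (t k) + b)) :
    ∀ k ≤ K, ∀ q ∈ s, t k q ∈ Set.Icc (s.inf' hne (t 0) + k * a) (s.sup' hne (t 0) + k * b) := by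
  intro k hk
  induction k with
  | zero =>
    simp only [Nat.cast_zero, zero_mul, add_zero]
    exact fun q hq => ⟨inf'_le (t 0) hq, le_sup' (t 0) hq⟩
  | succ k ih =>
    intro q hq
    have hinf : s.inf' hne (t 0) + k * a ≤ s.inf' hne (t k) :=
      le_inf' hne _ fun r hr => (ih (by omega) r hr).1
    have hsup : s.sup' hne (t k) ≤ s.sup' hne (t 0) + k * b :=
      sup'_le hne _ fun r hr => (ih (by omega) r hr).2
    obtain ⟨hlo, hhi⟩ := ht k hk q hq
    push_cast
    constructor <;> linarith

def IsAveragingRound (n f : ℕ) (Q : Finset (Fin n)) (d a b : ℝ) (τ τ' : Fin n → ℝ) : Prop :=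
  ∀ q ∈ Q, ∃ x : Fin n → ℝ, (∀ p ∈ Q, x p ∈ Set.Icc (τ p) (τ p + d)) ∧
    ∃ Tq ∈ Set.Icc a b, τ' q = ftMid n f x + Tq

namespace IsAveragingRound

variable {n f : ℕ} {Q : Finset (Fin n)} {d a b : ℝ} {τ τ' : Fin n → ℝ}

lemma mem_Icc (h : IsAveragingRound n f Q d a b τ τ') (hn : 2 * f < n) (hQ : #Qᶜ ≤ f)
    (hne : Q.Nonempty) : ∀ q ∈ Q, τ' q ∈ Set.Icc (Q.inf' hne τ + a) (Q.sup' hne τ + (b + d)) := by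
  intro q hq
  obtain ⟨x, hx, Tq, hTq, hq_eq⟩ := h q hq
  rw [hq_eq]
  have hmid := ftMid_mem_Icc hn hQ (a := Q.inf' hne τ) (b := Q.sup' hne τ + d) fun p hp =>
    ⟨(inf'_le τ hp).trans (hx p hp).1, (hx p hp).2.trans (by linarith [le_sup' τ hp])⟩
  constructor <;> linarith [hmid.1, hmid.2, hTq.1, hTq.2]

lemma sup'_sub_inf'_le (h : IsAveragingRound n f Q d a b τ τ') (hn : 3 * f < n) (hQ : #Qᶜ ≤ f)
    (hne : Q.Nonempty) :
    Q.sup' hne τ' - Q.inf' hne τ' ≤ (Q.sup' hne τ - Q.inf' hne τ) / 2 + (d + (b - a)) := by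
  obtain ⟨q, hq, hq_max⟩ := exists_mem_eq_sup' hne τ'
  obtain ⟨r, hr, hr_min⟩ := exists_mem_eq_inf' hne τ'
  obtain ⟨x, hx, Tq, hTq, hq_eq⟩ := h q hq
  obtain ⟨y, hy, Tr, hTr, hr_eq⟩ := h r hr
  have hmid := ftMid_sub_ftMid_le hn hQ (a := Q.inf' hne τ) (b := Q.sup' hne τ)
    (fun p hp => ⟨inf'_le τ hp, le_sup' τ hp⟩) hx hy
  rw [hq_max, hr_min, hq_eq, hr_eq]
  linarith [hTq.2, hTr.1]

end IsAveragingRound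

theorem stmt_9_general (n f : ℕ) (hn : 3 * f < n) (Q : Finset (Fin n)) (hQ : Qᶜ.card ≤ f)
    (d T ϑ : ℝ) (K : ℕ) (t : ℕ → Fin n → ℝ)
    (hstep : ∀ k < K, ∀ q ∈ Q, ∃ x : Fin n → ℝ,
      (∀ p ∈ Q, x p ∈ Set.Icc (t k p) (t k p + d)) ∧
        ∃ Tq ∈ Set.Icc (T / ϑ) T, t (k + 1) q = ftMid n f x + Tq) :
    ∀ k ≤ K,
      (Q.sup' (nonempty_of_compl hn hQ) (t k) - Q.inf' (nonempty_of_compl hn hQ) (t k) ≤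
        (2 : ℝ) ^ (-(k : ℤ)) *
            (Q.sup' (nonempty_of_compl hn hQ) (t 0) - Q.inf' (nonempty_of_compl hn hQ) (t 0))
          + 2 * (1 - (2 : ℝ) ^ (-(k : ℤ))) * (d + (1 - ϑ⁻¹) * T)) ∧
      (∀ q ∈ Q,
        Q.inf' (nonempty_of_compl hn hQ) (t 0) + k * (T / ϑ) ≤ t k q ∧
          t k q ≤ Q.sup' (nonempty_of_compl hn hQ) (t 0) + k * (T + d)) := by
  have hne := nonempty_of_compl hn hQ
  have hround : ∀ k < K, IsAveragingRound n f Q d (T / ϑ) T (t k) (t (k + 1)) := hstep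
  have hspread := le_two_zpow_neg_mul_add_of_le_half_add (K := K)
    (s := fun k => Q.sup' hne (t k) - Q.inf' hne (t k)) (c := d + (1 - ϑ⁻¹) * T) fun k hk => by
      have := (hround k hk).sup'_sub_inf'_le hn hQ hne
      rwa [show T - T / ϑ = (1 - ϑ⁻¹) * T by ring] at this
  have hdrift := mem_Icc_inf'_sup'_add_mul hne fun k hk =>
    (hround k hk).mem_Icc (by omega) hQ hne
  exact fun k hk => ⟨hspread k hk, hdrift k hk⟩

/-- Multi-round convergence of the abstract fault-tolerant averaging iteration:
the pulse spread shrinks geometrically to the steady-state precision while the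
pulses advance by roughly `T` per round. -/
theorem stmt_9 (n f : ℕ) (hn : 3 * f < n) (Q : Finset (Fin n)) (hQ : Qᶜ.card ≤ f)
    (d T ϑ : ℝ) (hd : 0 ≤ d) (hT : 0 ≤ T) (hϑ : 1 ≤ ϑ)
    (K : ℕ) (hK : 1 ≤ K) (t : ℕ → Fin n → ℝ)
    (hstep : ∀ k < K, ∀ q ∈ Q, ∃ x : Fin n → ℝ,
      (∀ p ∈ Q, x p ∈ Set.Icc (t k p) (t k p + d)) ∧
        ∃ Tq ∈ Set.Icc (T / ϑ) T, t (k + 1) q = ftMid n f x + Tq) :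
    ∀ k ≤ K,
      (Q.sup' (nonempty_of_compl hn hQ) (t k) - Q.inf' (nonempty_of_compl hn hQ) (t k) ≤
        (2 : ℝ) ^ (-(k : ℤ)) *
            (Q.sup' (nonempty_of_compl hn hQ) (t 0) - Q.inf' (nonempty_of_compl hn hQ) (t 0))
          + 2 * (1 - (2 : ℝ) ^ (-(k : ℤ))) * (d + (1 - ϑ⁻¹) * T)) ∧
      (∀ q ∈ Q,
        Q.inf' (nonempty_of_compl hn hQ) (t 0) + k * (T / ϑ) ≤ t k q ∧
          t k q ≤ Q.sup' (nonempty_of_compl hn hQ) (t 0) + k * (T + d)) :=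
  stmt_9_general n f hn Q hQ d T ϑ K t hstep
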